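/- arXiv:0804.1647 — 2 statements merged into one kernel-verified Lean document; each statement's English description precedes it below -/
import Mathlib

section
/- Let p be a prime and m+1 = Σ_{ν≥0} b_ν p^ν its base-p expansion. Then for every i ≥ 1, ⌊(m+1)/p + (1/p)·⌊(m+1)/p^{i-1}⌋⌋ = ⌊(b_0 + b_{i-1})/p⌋ + Σ_{ν≥1} b_ν p^{ν-1} + Σ_{ν≥i} b_ν p^{ν-i}. -/
/-!
Both finite sums are the integers `⌊(m+1)/p⌋` and `⌊(m+1)/p^i⌋` written in base `p`. Splitting
off the lowest digit, `m + 1 = b₀ + p⌊(m+1)/p⌋` and `⌊(m+1)/p^{i-1}⌋ = b_{i-1} + p⌊(m+1)/p^i⌋`,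
so the numerator on the left is `b₀ + b_{i-1}` plus a multiple of `p`.
-/

namespace Nat

theorem sum_range_div_pow_mod_mul_pow (p M N : ℕ) :
    ∑ ν ∈ Finset.range N, M / p ^ ν % p * p ^ ν = M % p ^ N := by
  induction N with
  | zero => simp [mod_one]
  | succ N ih =>
    rw [Finset.sum_range_succ, ih, pow_succ, mod_mul]
    ring

theorem finsum_div_pow_mod_mul_pow {p : ℕ} (hp : 1 < p) (M : ℕ) :
    ∑ᶠ ν : ℕ, M / p ^ ν % p * p ^ ν = M := by
  have hM : M < p ^ M := Nat.lt_pow_self hp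
  have hsupp : (Function.support fun ν : ℕ => M / p ^ ν % p * p ^ ν) ⊆ Finset.range M := by
    intro ν hν
    by_contra hνM
    have hlt : M < p ^ ν :=
      hM.trans_le (Nat.pow_le_pow_right (by omega) (by simpa using hνM))
    exact hν (by simp [div_eq_of_lt hlt])
  rw [finsum_eq_finsetSum_of_support_subset _ hsupp, sum_range_div_pow_mod_mul_pow,
    mod_eq_of_lt hM]

theorem finsum_div_pow_add_mod_mul_pow {p : ℕ} (hp : 1 < p) (M k : ℕ) :
    ∑ᶠ ν : ℕ, M / p ^ (ν + k) % p * p ^ ν = M / p ^ k := by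
  conv_rhs => rw [← finsum_div_pow_mod_mul_pow hp (M / p ^ k)]
  simp only [Nat.div_div_eq_div_mul, ← pow_add, add_comm k]

theorem div_pow_eq_mod_add_mul_div_pow_succ (p M k : ℕ) :
    M / p ^ k = M / p ^ k % p + p * (M / p ^ (k + 1)) := by
  rw [pow_succ, ← Nat.div_div_eq_div_mul, mod_add_div]

end Nat

theorem stmt_1_general (p m : ℕ) (hp : p.Prime)
    (b : ℕ → ℕ) (hb : ∀ ν, b ν = (m + 1) / p ^ ν % p)
    (i : ℕ) (hi : 1 ≤ i) :
    ((m + 1) + (m + 1) / p ^ (i - 1)) / p =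
      (b 0 + b (i - 1)) / p + ∑ᶠ ν : ℕ, b (ν + 1) * p ^ ν +
        ∑ᶠ ν : ℕ, b (ν + i) * p ^ ν := by
  set n := m + 1
  have hsum (k : ℕ) : ∑ᶠ ν : ℕ, b (ν + k) * p ^ ν = n / p ^ k := by
    simp only [hb]
    exact Nat.finsum_div_pow_add_mod_mul_pow hp.one_lt n k
  have hsplit (k : ℕ) : n / p ^ k = b k + p * (n / p ^ (k + 1)) :=
    hb k ▸ Nat.div_pow_eq_mod_add_mul_div_pow_succ p n k
  obtain ⟨j, rfl⟩ : ∃ j, i = j + 1 := ⟨i - 1, by omega⟩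
  have hlow : n = b 0 + p * (n / p) := by simpa using hsplit 0
  have hnum : n + n / p ^ j = b 0 + b j + (n / p + n / p ^ (j + 1)) * p := by
    linarith [hsplit j]
  rw [hsum 1, hsum (j + 1), pow_one, Nat.add_sub_cancel, hnum,
    Nat.add_mul_div_right _ _ hp.pos, add_assoc]

/-- For the base-p digits b of m+1:
`⌊(m+1)/p + (1/p)⌊(m+1)/p^{i-1}⌋⌋ = ⌊(b₀+b_{i-1})/p⌋ + Σ_{ν≥1} b_ν p^{ν-1} + Σ_{ν≥i} b_ν p^{ν-i}`. -/
theorem stmt_1 (p m : ℕ) (hp : p.Prime) (hm : 0 < m)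
    (b : ℕ → ℕ) (hb : ∀ ν, b ν = (m + 1) / p ^ ν % p)
    (i : ℕ) (hi : 1 ≤ i) :
    ((m + 1) + (m + 1) / p ^ (i - 1)) / p =
      (b 0 + b (i - 1)) / p + ∑ᶠ ν : ℕ, b (ν + 1) * p ^ ν +
        ∑ᶠ ν : ℕ, b (ν + i) * p ^ ν :=
  stmt_1_general p m hp b hb i hi
end

section
/- Let k be a field of characteristic p and let x_1, …, x_n ∈ k. The Moore determinant Δ(x_1,…,x_n) = det( (x_j^{p^{i-1}})_{1≤i,j≤n} ) is nonzero if and only if x_1, …, x_n are linearly independent over F_p. -/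
/-!
A relation `∑ cⱼ xⱼ = 0` with `cⱼ ∈ 𝔽_p` survives every Frobenius power `y ↦ y ^ p ^ i`, so it
gives a nonzero vector in the kernel of the Moore matrix `M`. Conversely, a nonzero row vector `a`
with `a M = 0` makes every `xⱼ` a root of the linearized polynomial `f = ∑ aᵢ X ^ p ^ i`. The
roots of `f` form an `𝔽_p`-subspace, so if the `xⱼ` are independent, `f` has at least `p ^ n`
roots, while its degree is at most `p ^ (n - 1)`.
-/

open Polynomial Matrix

noncomputable def mooreMatrix {R : Type*} [Semiring R] (p : ℕ) {n : ℕ} (x : Fin n → R) :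
    Matrix (Fin n) (Fin n) R :=
  Matrix.of fun i j => x j ^ p ^ (i : ℕ)

section LinearizedPolynomial

variable {R : Type*} [Semiring R] (p : ℕ) {n : ℕ}

noncomputable def linearizedPolynomial (a : Fin n → R) : R[X] :=
  ∑ i, C (a i) * X ^ p ^ (i : ℕ)

variable {p}

theorem coeff_linearizedPolynomial_pow (hp : 1 < p) (a : Fin n → R) (i : Fin n) :
    (linearizedPolynomial p a).coeff (p ^ (i : ℕ)) = a i := by
  have hinj : Function.Injective (p ^ · : ℕ → ℕ) := Nat.pow_right_injective hp
  simp [linearizedPolynomial, coeff_C_mul, coeff_X_pow, hinj.eq_iff, Fin.val_eq_val]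

theorem linearizedPolynomial_ne_zero (hp : 1 < p) {a : Fin n → R} (ha : a ≠ 0) :
    linearizedPolynomial p a ≠ 0 := by
  obtain ⟨i, hi⟩ := Function.ne_iff.1 ha
  exact fun h => hi (by rw [← coeff_linearizedPolynomial_pow hp a i, h, coeff_zero, Pi.zero_apply])

theorem natDegree_linearizedPolynomial_le (hp : 0 < p) (a : Fin n → R) :
    (linearizedPolynomial p a).natDegree ≤ p ^ (n - 1) :=
  natDegree_sum_le_of_forall_le _ _ fun i _ =>
    (natDegree_C_mul_le _ _).trans <| (natDegree_X_pow_le _).trans <|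
      Nat.pow_le_pow_right hp (Nat.le_sub_one_of_lt i.isLt)

theorem vecMul_mooreMatrix {R : Type*} [CommSemiring R] (a x : Fin n → R) (j : Fin n) :
    (a ᵥ* mooreMatrix p x) j = (linearizedPolynomial p a).eval (x j) := by
  simp [vecMul, dotProduct, mooreMatrix, linearizedPolynomial, eval_finsetSum]

end LinearizedPolynomial

section Frobenius

variable {k : Type*} [CommSemiring k] {p n : ℕ}

theorem eval_linearizedPolynomial_add [ExpChar k p] (a : Fin n → k) (y z : k) :
    (linearizedPolynomial p a).eval (y + z) =
      (linearizedPolynomial p a).eval y + (linearizedPolynomial p a).eval z := by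
  simp only [linearizedPolynomial, eval_finsetSum, eval_mul, eval_C, eval_pow, eval_X,
    add_pow_expChar_pow, mul_add, Finset.sum_add_distrib]

variable [Fact p.Prime] [Algebra (ZMod p) k]

theorem zmod_smul_pow_prime_pow (c : ZMod p) (y : k) (i : ℕ) :
    (c • y) ^ p ^ i = c • y ^ p ^ i := by
  rw [Algebra.smul_def, Algebra.smul_def, mul_pow, ← map_pow, ZMod.pow_card_pow]

theorem sum_zmod_smul_pow_char_pow [ExpChar k p] {ι : Type*}
    (s : Finset ι) (c : ι → ZMod p) (y : ι → k) (i : ℕ) :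
    (∑ j ∈ s, c j • y j) ^ p ^ i = ∑ j ∈ s, c j • y j ^ p ^ i := by
  simp only [sum_pow_char_pow, zmod_smul_pow_prime_pow]

theorem mooreMatrix_mulVec_algebraMap [ExpChar k p] (x : Fin n → k) (c : Fin n → ZMod p)
    (i : Fin n) :
    (mooreMatrix p x *ᵥ fun j => algebraMap (ZMod p) k (c j)) i =
      (∑ j, c j • x j) ^ p ^ (i : ℕ) := by
  rw [sum_zmod_smul_pow_char_pow]
  simp only [mulVec, dotProduct, mooreMatrix, of_apply, Algebra.smul_def, mul_comm]

theorem eval_linearizedPolynomial_zmod_smul (a : Fin n → k) (c : ZMod p) (y : k) :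
    (linearizedPolynomial p a).eval (c • y) = c • (linearizedPolynomial p a).eval y := by
  simp only [linearizedPolynomial, eval_finsetSum, eval_mul, eval_C, eval_pow, eval_X,
    zmod_smul_pow_prime_pow, mul_smul_comm, Finset.smul_sum]

theorem eval_linearizedPolynomial_eq_zero_of_mem_span [ExpChar k p] {ι : Type*} {a : Fin n → k}
    {x : ι → k} (hx : ∀ j, (linearizedPolynomial p a).eval (x j) = 0) {y : k}
    (hy : y ∈ Submodule.span (ZMod p) (Set.range x)) :
    (linearizedPolynomial p a).eval y = 0 := by
  induction hy using Submodule.span_induction with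
  | mem _ h => obtain ⟨j, rfl⟩ := h; exact hx j
  | zero => simpa using eval_linearizedPolynomial_zmod_smul a (0 : ZMod p) 0
  | add _ _ _ _ hy hz => rw [eval_linearizedPolynomial_add, hy, hz, add_zero]
  | smul c _ _ hy => rw [eval_linearizedPolynomial_zmod_smul, hy, smul_zero]

end Frobenius

theorem natCard_span_eq_pow {K V ι : Type*} [Field K] [AddCommGroup V] [Module K V] [Fintype ι]
    {x : ι → V} (hx : LinearIndependent K x) :
    Nat.card (Submodule.span K (Set.range x)) = Nat.card K ^ Fintype.card ι := by
  have := FiniteDimensional.span_of_finite K (Set.finite_range x)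
  rw [Module.natCard_eq_pow_finrank (K := K), finrank_span_eq_card hx]

section Moore

variable {k : Type*} [Field k] {p : ℕ} [Fact p.Prime] [CharP k p] [Algebra (ZMod p) k] {n : ℕ}

theorem linearIndependent_of_det_mooreMatrix_ne_zero {x : Fin n → k}
    (h : (mooreMatrix p x).det ≠ 0) : LinearIndependent (ZMod p) x := by
  rw [Fintype.linearIndependent_iff]
  intro c hc
  by_contra! ⟨i, hi⟩
  refine h (Matrix.exists_mulVec_eq_zero_iff.1 ⟨fun j => algebraMap (ZMod p) k (c j), ?_, ?_⟩)
  · exact fun h0 => hi <| (algebraMap (ZMod p) k).injective <| by simpa using congrFun h0 i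
  · funext i
    rw [mooreMatrix_mulVec_algebraMap x c i, hc, zero_pow (expChar_pow_pos k p _).ne']
    rfl

theorem det_mooreMatrix_ne_zero_of_linearIndependent {x : Fin n → k}
    (hx : LinearIndependent (ZMod p) x) : (mooreMatrix p x).det ≠ 0 := by
  have hp : p.Prime := Fact.out
  intro hdet
  obtain ⟨a, ha0, ha⟩ := Matrix.exists_vecMul_eq_zero_iff.2 hdet
  have hn : 0 < n := Nat.pos_of_ne_zero (by rintro rfl; exact ha0 (Subsingleton.elim _ _))
  set f := linearizedPolynomial p a
  have hf : f ≠ 0 := linearizedPolynomial_ne_zero hp.one_lt ha0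
  have hroots : (Submodule.span (ZMod p) (Set.range x) : Set k) ⊆ f.rootSet k := by
    intro y hy
    refine mem_rootSet.2 ⟨hf, ?_⟩
    rw [coe_aeval_eq_eval]
    refine eval_linearizedPolynomial_eq_zero_of_mem_span (fun j => ?_) hy
    rw [← vecMul_mooreMatrix, ha, Pi.zero_apply]
  have hle : p ^ n ≤ p ^ (n - 1) :=
    calc p ^ n = (Submodule.span (ZMod p) (Set.range x) : Set k).ncard := by
          rw [← Nat.card_coe_set_eq, SetLike.coe_sort_coe, natCard_span_eq_pow hx,
            Nat.card_zmod, Fintype.card_fin]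
      _ ≤ (f.rootSet k).ncard := Set.ncard_le_ncard hroots (f.rootSet_finite k)
      _ ≤ f.natDegree := f.ncard_rootSet_le k
      _ ≤ p ^ (n - 1) := natDegree_linearizedPolynomial_le hp.pos a
  exact (Nat.pow_lt_pow_right hp.one_lt (Nat.sub_lt hn one_pos)).not_ge hle

end Moore

/-- The Moore determinant det(x_j^{p^{i-1}}) is nonzero iff x₁,…,x_n are
linearly independent over 𝔽_p. -/
theorem stmt_9 (k : Type*) [Field k] (p : ℕ) (hp : p.Prime) [CharP k p]
    [Algebra (ZMod p) k] (n : ℕ) (x : Fin n → k) :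
    (Matrix.of fun i j : Fin n => x j ^ p ^ (i : ℕ)).det ≠ 0 ↔
      LinearIndependent (ZMod p) x := by
  have : Fact p.Prime := ⟨hp⟩
  exact ⟨linearIndependent_of_det_mooreMatrix_ne_zero,
    det_mooreMatrix_ne_zero_of_linearIndependent⟩
end
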